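/- arXiv:2407.01813 — 7 statements merged into one kernel-verified Lean document; each statement's English description precedes it below -/
import Mathlib

section
/- If x_1, ..., x_n are points on the unit sphere S^{d-1} in R^d with n ≥ 2, then the minimum pairwise Euclidean distance min_{i≠j} ||x_i - x_j|| is at most sqrt(2n/(n-1)). -/
/-!
Summing `‖x i - x j‖²` over all ordered pairs gives `2 n ∑ ‖x i‖² - 2 ‖∑ x i‖² ≤ 2 n²` for unit
vectors. The diagonal contributes nothing, so the smallest of the `n (n - 1)` off-diagonal squared
distances is at most their average `2 n / (n - 1)`.
-/

open Finset

section

variable {E ι : Type*} [NormedAddCommGroup E] [InnerProductSpace ℝ E]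

theorem sum_sum_norm_sub_sq (s : Finset ι) (x : ι → E) :
    ∑ i ∈ s, ∑ j ∈ s, ‖x i - x j‖ ^ 2
      = 2 * #s * ∑ i ∈ s, ‖x i‖ ^ 2 - 2 * ‖∑ i ∈ s, x i‖ ^ 2 := by
  have hinner : ∑ i ∈ s, ∑ j ∈ s, inner ℝ (x i) (x j) = ‖∑ i ∈ s, x i‖ ^ 2 := by
    rw [← real_inner_self_eq_norm_sq, sum_inner]
    simp only [inner_sum]
  simp only [norm_sub_sq_real, sum_add_distrib, sum_sub_distrib, sum_const, nsmul_eq_mul,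
    ← mul_sum, hinner]
  ring

theorem sum_sum_norm_sub_sq_le (s : Finset ι) (x : ι → E) :
    ∑ i ∈ s, ∑ j ∈ s, ‖x i - x j‖ ^ 2 ≤ 2 * #s * ∑ i ∈ s, ‖x i‖ ^ 2 := by
  rw [sum_sum_norm_sub_sq]
  linarith [sq_nonneg ‖∑ i ∈ s, x i‖]

theorem sum_offDiag_norm_sub_sq_le_of_norm_eq_one [DecidableEq ι] (s : Finset ι) {x : ι → E}
    (hx : ∀ i ∈ s, ‖x i‖ = 1) :
    ∑ p ∈ s.offDiag, ‖x p.1 - x p.2‖ ^ 2 ≤ 2 * #s ^ 2 := by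
  have hproduct :
      ∑ p ∈ s.offDiag, ‖x p.1 - x p.2‖ ^ 2 = ∑ p ∈ s ×ˢ s, ‖x p.1 - x p.2‖ ^ 2 := by
    refine sum_subset (fun p hp => ?_) fun p hp hnot => ?_
    · obtain ⟨hp1, hp2, -⟩ := mem_offDiag.mp hp
      exact mem_product.mpr ⟨hp1, hp2⟩
    · obtain ⟨hp1, hp2⟩ := mem_product.mp hp
      have hdiag : p.1 = p.2 := by by_contra h; exact hnot (mem_offDiag.mpr ⟨hp1, hp2, h⟩)
      simp [hdiag]
  calc ∑ p ∈ s.offDiag, ‖x p.1 - x p.2‖ ^ 2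
      = ∑ i ∈ s, ∑ j ∈ s, ‖x i - x j‖ ^ 2 := by rw [hproduct, sum_product]
    _ ≤ 2 * #s * ∑ i ∈ s, ‖x i‖ ^ 2 := sum_sum_norm_sub_sq_le s x
    _ = 2 * #s ^ 2 := by
      rw [sum_congr rfl fun i hi => by rw [hx i hi, one_pow], sum_const, nsmul_one]
      ring

end

theorem rankin_simplex_bound (d n : ℕ) (hn : 2 ≤ n)
    (x : Fin n → EuclideanSpace ℝ (Fin d)) (hx : ∀ i, ‖x i‖ = 1) :
    ∃ i j : Fin n, i ≠ j ∧ ‖x i - x j‖ ≤ Real.sqrt (2 * n / ((n : ℝ) - 1)) := by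
  have hsub_pos : (0 : ℝ) < n - 1 := by
    have : (2 : ℝ) ≤ n := by exact_mod_cast hn
    linarith
  have hpairs : (#(univ : Finset (Fin n)).offDiag : ℝ) = n * (n - 1) := by
    rw [offDiag_card, card_univ, Fintype.card_fin, Nat.cast_sub (Nat.le_mul_self n)]
    push_cast
    ring
  have hnonempty : (univ : Finset (Fin n)).offDiag.Nonempty := by
    refine ⟨(⟨0, by omega⟩, ⟨1, by omega⟩), ?_⟩
    simp [Fin.ext_iff]
  have hsum : ∑ p ∈ univ.offDiag, ‖x p.1 - x p.2‖ ^ 2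
      ≤ ∑ _p ∈ (univ : Finset (Fin n)).offDiag, 2 * n / ((n : ℝ) - 1) := by
    rw [sum_const, nsmul_eq_mul, hpairs]
    calc _ ≤ 2 * (n : ℝ) ^ 2 := by
          simpa only [card_univ, Fintype.card_fin] using
            sum_offDiag_norm_sub_sq_le_of_norm_eq_one univ fun i _ => hx i
      _ = n * (n - 1) * (2 * n / (n - 1)) := by field_simp
  obtain ⟨⟨i, j⟩, hij, hle⟩ := exists_le_of_sum_le hnonempty hsum
  exact ⟨i, j, (mem_offDiag.mp hij).2.2, Real.le_sqrt_of_sq_le hle⟩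
end

section
/- Unit vectors x_1, ..., x_n in R^d (n ≥ 2) achieve equality in Rankin's simplex bound, i.e., min_{i≠j} ||x_i - x_j|| = sqrt(2n/(n-1)), if and only if all pairwise distances are equal to sqrt(2n/(n-1)) and sum_i x_i = 0. -/
/-!
Expanding `‖xᵢ - xⱼ‖² = 2 - 2⟪xᵢ, xⱼ⟫` gives `∑_{i ≠ j} ‖xᵢ - xⱼ‖² = 2n² - 2‖∑ᵢ xᵢ‖² ≤ 2n²`,
while each of the `n(n - 1)` terms is at least the squared minimal distance. If that minimum is
`2n/(n - 1)`, both bounds meet at `2n²`: hence `∑ᵢ xᵢ = 0` and every term equals the minimum.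
-/

open Finset

theorem Finset.cast_card_offDiag {α R : Type*} [DecidableEq α] [Ring R] (s : Finset α) :
    (#s.offDiag : R) = #s * (#s - 1) := by
  rw [offDiag_card, Nat.cast_sub (Nat.le_mul_self _), Nat.cast_mul, mul_sub_one]

section

variable {E ι : Type*} [NormedAddCommGroup E] [InnerProductSpace ℝ E] [Fintype ι] [DecidableEq ι]

theorem sum_offDiag_norm_sub_sq (x : ι → E) :
    ∑ p ∈ univ.offDiag, ‖x p.1 - x p.2‖ ^ 2 =
      2 * Fintype.card ι * ∑ i, ‖x i‖ ^ 2 - 2 * ‖∑ i, x i‖ ^ 2 := by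
  have hdiag : ∑ p ∈ univ.offDiag, ‖x p.1 - x p.2‖ ^ 2 = ∑ i, ∑ j, ‖x i - x j‖ ^ 2 := by
    rw [← sum_product', univ_product_univ]
    refine sum_subset (subset_univ _) fun p _ hp => ?_
    have hp : p.1 = p.2 := by simpa [mem_offDiag] using hp
    simp [hp]
  have hsum : ‖∑ i, x i‖ ^ 2 = ∑ i, ∑ j, inner ℝ (x i) (x j) := by
    rw [← real_inner_self_eq_norm_sq, sum_inner]
    simp only [inner_sum]
  rw [hdiag, hsum]
  simp only [norm_sub_sq_real, sum_add_distrib, sum_sub_distrib, ← mul_sum, sum_const, card_univ,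
    nsmul_eq_mul]
  ring

theorem norm_sub_sq_eq_and_sum_eq_zero_of_le_norm_sub_sq (x : ι → E) (hx : ∀ i, ‖x i‖ = 1)
    (hι : 2 ≤ Fintype.card ι)
    (hmin : ∀ i j, i ≠ j → 2 * Fintype.card ι / ((Fintype.card ι : ℝ) - 1) ≤ ‖x i - x j‖ ^ 2) :
    (∀ i j, i ≠ j → ‖x i - x j‖ ^ 2 = 2 * Fintype.card ι / ((Fintype.card ι : ℝ) - 1)) ∧
      ∑ i, x i = 0 := by
  set n : ℝ := (Fintype.card ι : ℝ)
  have hn : 1 < n := by simp only [n]; norm_cast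
  have hle : ∀ p ∈ univ.offDiag, 2 * n / (n - 1) ≤ ‖x p.1 - x p.2‖ ^ 2 := fun p hp =>
    hmin p.1 p.2 (mem_offDiag.mp hp).2.2
  have hconst : ∑ _p ∈ (univ : Finset ι).offDiag, 2 * n / (n - 1) = 2 * n ^ 2 := by
    rw [sum_const, nsmul_eq_mul, cast_card_offDiag, card_univ]
    field_simp [(sub_pos.mpr hn).ne']
    ring
  have hsum : ∑ p ∈ univ.offDiag, ‖x p.1 - x p.2‖ ^ 2 = 2 * n ^ 2 - 2 * ‖∑ i, x i‖ ^ 2 := by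
    simp only [sum_offDiag_norm_sub_sq, hx, one_pow, sum_const, card_univ, nsmul_eq_mul,
      mul_one, n]
    ring
  have hzero : ∑ i, x i = 0 := by
    have hsq : ‖∑ i, x i‖ ^ 2 = 0 := by
      linarith [hconst ▸ hsum ▸ sum_le_sum hle, sq_nonneg ‖∑ i, x i‖]
    simpa using hsq
  have heq := (sum_eq_sum_iff_of_le hle).mp (by rw [hconst, hsum, hzero, norm_zero]; ring)
  exact ⟨fun i j hij => (heq (i, j) (by simp [mem_offDiag, hij])).symm, hzero⟩

end

theorem rankin_simplex_equality (d n : ℕ) (hn : 2 ≤ n)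
    (x : Fin n → EuclideanSpace ℝ (Fin d)) (hx : ∀ i, ‖x i‖ = 1) :
    IsLeast {s : ℝ | ∃ i j : Fin n, i ≠ j ∧ s = ‖x i - x j‖}
        (Real.sqrt (2 * n / ((n : ℝ) - 1))) ↔
      ((∀ i j : Fin n, i ≠ j → ‖x i - x j‖ = Real.sqrt (2 * n / ((n : ℝ) - 1))) ∧
        ∑ i, x i = 0) := by
  constructor
  · rintro ⟨-, hlb⟩
    have hmin : ∀ i j : Fin n, i ≠ j → 2 * n / ((n : ℝ) - 1) ≤ ‖x i - x j‖ ^ 2 :=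
      fun i j hij => (Real.sqrt_le_left (norm_nonneg _)).mp (hlb ⟨i, j, hij, rfl⟩)
    obtain ⟨heq, hzero⟩ := norm_sub_sq_eq_and_sum_eq_zero_of_le_norm_sub_sq x hx
      (by simpa using hn) (by simpa using hmin)
    simp only [Fintype.card_fin] at heq
    refine ⟨fun i j hij => ?_, hzero⟩
    rw [← heq i j hij, Real.sqrt_sq (norm_nonneg _)]
  · rintro ⟨heq, -⟩
    have h01 : (⟨0, by omega⟩ : Fin n) ≠ ⟨1, by omega⟩ := by simp
    exact ⟨⟨_, _, h01, (heq _ _ h01).symm⟩, fun _ ⟨i, j, hij, hs⟩ => hs ▸ (heq i j hij).ge⟩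
end

section
/- If x_1, ..., x_n are unit vectors in R^d with n > d + 1, then min_{i≠j} ||x_i - x_j|| ≤ sqrt(2); equivalently, there exist i ≠ j with ⟨x_i, x_j⟩ ≥ 0. -/
/-!
If all pairwise inner products were negative, the unit vectors would form an obtuse family.
In a vanishing combination `∑ gᵢ vᵢ` of an obtuse family, the part with `gᵢ > 0` equals minus
the rest, so its squared norm is a sum of terms `gᵢ (-gⱼ) ⟪vᵢ, vⱼ⟫ ≤ 0` and it vanishes.
Pairing the positive part with one further member of the family, which makes an obtuse angle with
all the others, shows that the positive part is empty. Hence all but one vector of an obtuse family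
are linearly independent, so an obtuse family in `ℝ^d` has at most `d + 1` members.
-/

open Finset

section Obtuse

variable {E : Type*} [NormedAddCommGroup E] [InnerProductSpace ℝ E] {ι : Type*} [Fintype ι]

theorem sum_smul_filter_pos_eq_zero_of_pairwise_inner_nonpos {v : ι → E}
    (hv : Pairwise fun i j => inner ℝ (v i) (v j) ≤ 0) {g : ι → ℝ}
    (hg : ∑ i, g i • v i = 0) : ∑ i with 0 < g i, g i • v i = 0 := by
  classical
  set y := ∑ i with 0 < g i, g i • v i
  have hy : y = ∑ j with ¬0 < g j, (-g j) • v j := by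
    rw [← sum_filter_add_sum_filter_not univ (fun i => 0 < g i)] at hg
    simp only [neg_smul, sum_neg_distrib]
    exact eq_neg_of_add_eq_zero_left hg
  refine real_inner_self_nonpos.mp ?_
  nth_rewrite 2 [hy]
  simp only [y, sum_inner, inner_sum, real_inner_smul_left, real_inner_smul_right]
  refine sum_nonpos fun i hi => sum_nonpos fun j hj => ?_
  simp only [mem_filter, mem_univ, true_and] at hi hj
  have hji : j ≠ i := fun h => hi (h ▸ hj)
  exact mul_nonpos_of_nonneg_of_nonpos (by linarith)
    (mul_nonpos_of_nonneg_of_nonpos hj.le (hv hji))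

theorem nonpos_of_sum_smul_eq_zero_of_pairwise_inner_nonpos {v : ι → E}
    (hv : Pairwise fun i j => inner ℝ (v i) (v j) ≤ 0) {w : E} (hw : ∀ i, inner ℝ (v i) w < 0)
    {g : ι → ℝ} (hg : ∑ i, g i • v i = 0) (i : ι) : g i ≤ 0 := by
  classical
  by_contra! hi
  have hneg : inner ℝ (∑ j with 0 < g j, g j • v j) w < 0 := by
    rw [sum_inner]
    refine sum_neg (fun j hj => ?_) ⟨i, by simpa using hi⟩
    rw [real_inner_smul_left]
    exact mul_neg_of_pos_of_neg (by simpa using hj) (hw j)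
  rw [sum_smul_filter_pos_eq_zero_of_pairwise_inner_nonpos hv hg, inner_zero_left] at hneg
  exact hneg.false

theorem linearIndependent_of_pairwise_inner_nonpos {v : ι → E}
    (hv : Pairwise fun i j => inner ℝ (v i) (v j) ≤ 0) {w : E} (hw : ∀ i, inner ℝ (v i) w < 0) :
    LinearIndependent ℝ v := by
  refine Fintype.linearIndependent_iff.mpr fun g hg i => le_antisymm
    (nonpos_of_sum_smul_eq_zero_of_pairwise_inner_nonpos hv hw hg i) ?_
  have hg' : ∑ i, (-g) i • v i = 0 := by simp [neg_smul, sum_neg_distrib, hg]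
  simpa using nonpos_of_sum_smul_eq_zero_of_pairwise_inner_nonpos hv hw hg' i

theorem card_le_finrank_add_one_of_pairwise_inner_neg [FiniteDimensional ℝ E] {v : ι → E}
    (hv : Pairwise fun i j => inner ℝ (v i) (v j) < 0) :
    Fintype.card ι ≤ Module.finrank ℝ E + 1 := by
  classical
  rcases isEmpty_or_nonempty ι with hι | ⟨⟨i₀⟩⟩
  · simp
  have hli : LinearIndependent ℝ fun i : {i // i ≠ i₀} => v i :=
    linearIndependent_of_pairwise_inner_nonpos
      (fun i j hij => (hv (Subtype.coe_injective.ne hij)).le) (fun i => hv i.2)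
  have hcard := hli.fintype_card_le_finrank
  rw [Fintype.card_subtype_compl, Fintype.card_subtype_eq] at hcard
  omega

end Obtuse

theorem norm_sub_le_sqrt_two_of_inner_nonneg {E : Type*} [NormedAddCommGroup E]
    [InnerProductSpace ℝ E] {a b : E} (ha : ‖a‖ = 1) (hb : ‖b‖ = 1) (hab : 0 ≤ inner ℝ a b) :
    ‖a - b‖ ≤ Real.sqrt 2 := by
  rw [Real.le_sqrt (norm_nonneg _) zero_le_two, norm_sub_sq_real, ha, hb]
  linarith

theorem rankin_orthoplex_bound (d n : ℕ) (hn : d + 1 < n)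
    (x : Fin n → EuclideanSpace ℝ (Fin d)) (hx : ∀ i, ‖x i‖ = 1) :
    ∃ i j : Fin n, i ≠ j ∧ ‖x i - x j‖ ≤ Real.sqrt 2 ∧
      (0 : ℝ) ≤ inner ℝ (x i) (x j) := by
  obtain ⟨i, j, hij, hinner⟩ : ∃ i j : Fin n, i ≠ j ∧ 0 ≤ inner ℝ (x i) (x j) := by
    by_contra! hneg
    have hcard := card_le_finrank_add_one_of_pairwise_inner_neg (v := x) hneg
    rw [Fintype.card_fin, finrank_euclideanSpace_fin] at hcard
    omega
  exact ⟨i, j, hij, norm_sub_le_sqrt_two_of_inner_nonneg (hx i) (hx j) hinner, hinner⟩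
end

section
/- For every d ≥ 1, there exists a real (d,d,d+1)-Stiefel simplex code: d+1 orthogonal matrices X_1, ..., X_{d+1} ∈ O(d) with ||X_i - X_j||_Fro² = 2d+2 for all i ≠ j and sum_i X_i = 0. -/
/-!
Let `P g` be the permutation matrix of `x ↦ x + g` on `ℝ^(d+1)` (for `g : Fin (d + 1)`) and let
`U` have orthonormal columns spanning the hyperplane `∑ xᵢ = 0`, so that `U Uᵀ = 1 - J/(d+1)` with
`J` the all-ones matrix. Every `P g` fixes `J`, hence commutes with `U Uᵀ`, and so
`X g = Uᵀ (P g) U` is a representation of `Fin (d + 1)` by orthogonal `d × d` matrices.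
Its Frobenius inner products are `tr (X g)ᵀ (X h) = tr (P (h - g)) - 1 = -1` for `g ≠ h`, because a
nontrivial translation has no fixed points; this gives the squared distance `2d + 2`.
Finally `∑ P g = J = (d+1)(1 - U Uᵀ)` is annihilated by the compression `Uᵀ · U`.
-/

open Matrix

namespace Matrix

section Compression

variable {m n R : Type*} [Fintype m] [CommRing R]

def compress (U : Matrix m n R) (A : Matrix m m R) : Matrix n n R := Uᵀ * A * U

variable (U : Matrix m n R)

lemma transpose_compress (A : Matrix m m R) : (compress U A)ᵀ = compress U Aᵀ := by
  simp only [compress, transpose_mul, transpose_transpose, Matrix.mul_assoc]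

lemma compress_smul (c : R) (A : Matrix m m R) : compress U (c • A) = c • compress U A := by
  simp only [compress, Matrix.mul_smul, Matrix.smul_mul]

lemma sum_compress {ι : Type*} [Fintype ι] (A : ι → Matrix m m R) :
    ∑ i, compress U (A i) = compress U (∑ i, A i) := by
  simp only [compress, Matrix.mul_sum, Matrix.sum_mul]

lemma trace_compress [Fintype n] (A : Matrix m m R) :
    trace (compress U A) = trace (A * (U * Uᵀ)) := by
  rw [compress, Matrix.mul_assoc, trace_mul_comm, Matrix.mul_assoc]

variable {U} [Fintype n] [DecidableEq n]

lemma compress_mul_compress (hU : Uᵀ * U = 1) {A : Matrix m m R} (hA : Commute A (U * Uᵀ))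
    (B : Matrix m m R) : compress U A * compress U B = compress U (A * B) := by
  calc Uᵀ * A * U * (Uᵀ * B * U) = Uᵀ * (A * (U * Uᵀ)) * B * U := by
        simp only [Matrix.mul_assoc]
    _ = Uᵀ * U * Uᵀ * A * B * U := by rw [hA.eq]; simp only [Matrix.mul_assoc]
    _ = Uᵀ * (A * B) * U := by rw [hU, Matrix.one_mul, Matrix.mul_assoc (Uᵀ)]

lemma compress_one_sub_mul_transpose [DecidableEq m] (hU : Uᵀ * U = 1) :
    compress U (1 - U * Uᵀ) = 0 := by
  rw [compress, Matrix.mul_sub, Matrix.sub_mul, Matrix.mul_one, ← Matrix.mul_assoc, hU,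
    Matrix.one_mul, hU, sub_self]

end Compression

section RightRegular

variable {G : Type*} [AddGroup G] [DecidableEq G] (R : Type*)

def rightRegular [Zero R] [One R] (g : G) : Matrix G G R := (Equiv.addRight g).permMatrix R

lemma rightRegular_apply [Zero R] [One R] (g i j : G) :
    rightRegular R g i j = if j = i + g then 1 else 0 := by
  simp [rightRegular, PEquiv.toMatrix_apply, eq_comm]

@[simp]
lemma rightRegular_zero [Zero R] [One R] : rightRegular R (0 : G) = 1 := by
  simp [rightRegular]

lemma transpose_rightRegular [Zero R] [One R] (g : G) :
    (rightRegular R g)ᵀ = rightRegular R (-g) := by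
  simp [rightRegular]

variable [Fintype G] [CommRing R]

lemma transpose_rightRegular_mul (g h : G) :
    (rightRegular R g)ᵀ * rightRegular R h = rightRegular R (-g + h) := by
  simp [rightRegular]

lemma trace_rightRegular_of_ne_zero {g : G} (hg : g ≠ 0) : trace (rightRegular R g) = 0 := by
  simp [rightRegular, trace_permutation, Function.fixedPoints, Function.IsFixedPt, hg]

lemma rightRegular_mul_allOnes (g : G) :
    rightRegular R g * of (fun _ _ => 1) = of fun _ _ => 1 := by
  ext i j
  simp [mul_apply, rightRegular_apply, Finset.sum_ite_eq']

lemma allOnes_mul_rightRegular (g : G) :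
    of (fun _ _ => 1) * rightRegular R g = of fun _ _ => 1 := by
  ext i j
  simp [mul_apply, rightRegular_apply, ← sub_eq_iff_eq_add]

lemma commute_rightRegular_allOnes (g : G) :
    Commute (rightRegular R g) (of fun _ _ => 1) :=
  (rightRegular_mul_allOnes R g).trans (allOnes_mul_rightRegular R g).symm

lemma sum_rightRegular : ∑ g : G, rightRegular R g = of fun _ _ => (1 : R) := by
  ext i j
  simp [sum_apply, rightRegular_apply, eq_comm (a := j), ← eq_neg_add_iff_add_eq]

end RightRegular

end Matrix

namespace OrthonormalBasis

variable {ι κ : Type*} [Fintype ι] [Fintype κ] {K : Submodule ℝ (EuclideanSpace ℝ ι)}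

noncomputable def frameMatrix (b : OrthonormalBasis κ ℝ K) : Matrix ι κ ℝ :=
  of fun i j => (b j : EuclideanSpace ℝ ι) i

variable (b : OrthonormalBasis κ ℝ K)

lemma transpose_frameMatrix_mul_self [DecidableEq κ] : b.frameMatrixᵀ * b.frameMatrix = 1 := by
  ext j j'
  have h := orthonormal_iff_ite.mp b.orthonormal j j'
  rw [Submodule.coe_inner, PiLp.inner_apply] at h
  simpa [frameMatrix, mul_apply, Matrix.one_apply, mul_comm] using h

lemma frameMatrix_mul_transpose_apply [DecidableEq ι] (i i' : ι) :
    (b.frameMatrix * b.frameMatrixᵀ) i i' = K.starProjection (EuclideanSpace.single i' 1) i := by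
  simp [b.starProjection_eq_sum_rankOne, frameMatrix, mul_apply, InnerProductSpace.rankOne_apply,
    EuclideanSpace.inner_single_right, mul_comm]

end OrthonormalBasis

lemma exists_orthonormal_frame_sum_zero_hyperplane {ι : Type*} [Fintype ι] [DecidableEq ι] {n : ℕ}
    (hι : Fintype.card ι = n + 1) :
    ∃ U : Matrix ι (Fin n) ℝ, Uᵀ * U = 1 ∧ U * Uᵀ = 1 - ((n : ℝ) + 1)⁻¹ • of fun _ _ => 1 := by
  set ones : EuclideanSpace ℝ ι := WithLp.toLp 2 fun _ => 1
  have hones : ‖ones‖ ^ 2 = n + 1 := by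
    simp [ones, EuclideanSpace.norm_sq_eq, hι]
  have hrank : Module.finrank ℝ (ℝ ∙ ones)ᗮ = n := by
    have hne : ones ≠ 0 := by
      rintro h; simp [h] at hones; linarith
    have := Submodule.finrank_add_finrank_orthogonal (ℝ ∙ ones)
    rw [finrank_span_singleton hne, finrank_euclideanSpace, hι] at this
    omega
  let b := (stdOrthonormalBasis ℝ (ℝ ∙ ones)ᗮ).reindex (finCongr hrank)
  refine ⟨b.frameMatrix, b.transpose_frameMatrix_mul_self, ?_⟩
  ext i i'
  rw [b.frameMatrix_mul_transpose_apply, Submodule.starProjection_orthogonal_val,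
    Submodule.starProjection_singleton, hones]
  simp [ones, Matrix.one_apply, EuclideanSpace.inner_single_right, div_eq_inv_mul]

lemma sum_sq_sub_eq_of_transpose_mul_self_eq_one {κ : Type*} [Fintype κ] [DecidableEq κ]
    {A B : Matrix κ κ ℝ} (hA : Aᵀ * A = 1) (hB : Bᵀ * B = 1) :
    ∑ a, ∑ b, (A a b - B a b) ^ 2 = 2 * Fintype.card κ - 2 * trace (Aᵀ * B) := by
  have hfrob : ∑ a, ∑ b, (A a b - B a b) ^ 2 = trace ((A - B)ᵀ * (A - B)) := by
    simp only [trace, diag_apply, mul_apply, transpose_apply, Matrix.sub_apply, sq]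
    exact Finset.sum_comm
  have hsymm : trace (Bᵀ * A) = trace (Aᵀ * B) := by
    rw [← trace_transpose, transpose_mul, transpose_transpose]
  rw [hfrob, transpose_sub, sub_mul, mul_sub, mul_sub, trace_sub, trace_sub, trace_sub, hA, hB,
    hsymm, trace_one]
  ring

theorem exists_square_ssc_general (d : ℕ) :
    ∃ X : Fin (d + 1) → Matrix (Fin d) (Fin d) ℝ,
      (∀ i, (X i)ᵀ * X i = 1) ∧
      (∀ i j : Fin (d + 1), i ≠ j →
        ∑ a, ∑ b, (X i a b - X j a b) ^ 2 = 2 * d + 2) ∧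
      ∑ i, X i = 0 := by
  obtain ⟨U, hU, hUU⟩ := exists_orthonormal_frame_sum_zero_hyperplane (Fintype.card_fin (d + 1))
  have hcomm (g : Fin (d + 1)) : Commute (rightRegular ℝ g) (U * Uᵀ) := by
    rw [hUU]
    exact (Commute.one_right _).sub_right ((commute_rightRegular_allOnes ℝ g).smul_right _)
  have hgram (g h : Fin (d + 1)) : (compress U (rightRegular ℝ g))ᵀ * compress U (rightRegular ℝ h)
      = compress U (rightRegular ℝ (-g + h)) := by
    rw [transpose_compress,
      compress_mul_compress hU (by simpa only [transpose_rightRegular] using hcomm (-g)),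
      transpose_rightRegular_mul]
  have horth (g : Fin (d + 1)) :
      (compress U (rightRegular ℝ g))ᵀ * compress U (rightRegular ℝ g) = 1 := by
    rw [hgram, neg_add_cancel, rightRegular_zero, compress, Matrix.mul_one, hU]
  refine ⟨fun g => compress U (rightRegular ℝ g), horth, fun g h hgh => ?_, ?_⟩
  · have hne : -g + h ≠ 0 := by rwa [neg_add_eq_zero.ne]
    have htrace_ones : trace (of fun _ _ => 1 : Matrix (Fin (d + 1)) (Fin (d + 1)) ℝ) = d + 1 := by
      simp [trace]
    rw [sum_sq_sub_eq_of_transpose_mul_self_eq_one (horth g) (horth h), hgram, trace_compress, hUU,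
      Matrix.mul_sub, Matrix.mul_one, Matrix.mul_smul, rightRegular_mul_allOnes, trace_sub,
      trace_smul, trace_rightRegular_of_ne_zero ℝ hne, htrace_ones, Fintype.card_fin, smul_eq_mul,
      inv_mul_cancel₀ (by positivity)]
    ring
  · have hones : (of fun _ _ => 1 : Matrix (Fin (d + 1)) (Fin (d + 1)) ℝ)
        = ((d : ℝ) + 1) • (1 - U * Uᵀ) := by
      rw [hUU, sub_sub_cancel, smul_smul, mul_inv_cancel₀ (by positivity), one_smul]
    rw [sum_compress, sum_rightRegular, hones, compress_smul, compress_one_sub_mul_transpose hU,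
      smul_zero]

theorem exists_square_ssc (d : ℕ) (hd : 1 ≤ d) :
    ∃ X : Fin (d + 1) → Matrix (Fin d) (Fin d) ℝ,
      (∀ i, (X i)ᵀ * X i = 1) ∧
      (∀ i j : Fin (d + 1), i ≠ j →
        ∑ a, ∑ b, (X i a b - X j a b) ^ 2 = 2 * d + 2) ∧
      ∑ i, X i = 0 :=
  exists_square_ssc_general d
end

section
/- Let d be even, let A be the d×d block matrix [[0, -I_{d/2}],[I_{d/2}, 0]], and let x_1, ..., x_n be unit vectors in R^d forming a regular simplex (pairwise inner products -1/(n-1), sum zero). Then the matrices X_i := [x_i, A x_i] ∈ R^{d×2} form a real (d,2,n)-Stiefel simplex code: each X_i has orthonormal columns, ||X_i - X_j||_Fro² = 4n/(n-1) for i ≠ j, and sum_i X_i = 0. -/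
open Matrix

/-- The block matrix `[[0, -I],[I, 0]]` of size `2m × 2m`. -/
def sympA (m : ℕ) : Matrix (Fin (2 * m)) (Fin (2 * m)) ℝ :=
  Matrix.of fun i j =>
    if (i : ℕ) = (j : ℕ) + m then 1 else if (j : ℕ) = (i : ℕ) + m then -1 else 0

private lemma lt1 {m : ℕ} (i : Fin m) : (i : ℕ) < 2 * m := by have := i.isLt; omega
private lemma lt2 {m : ℕ} (i : Fin m) : m + (i : ℕ) < 2 * m := by have := i.isLt; omega

private lemma sum_split {M : Type*} [AddCommMonoid M] (m : ℕ) (f : Fin (2*m) → M) :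
    ∑ a, f a = (∑ i : Fin m, f ⟨i, lt1 i⟩) + ∑ i : Fin m, f ⟨m + i, lt2 i⟩ := by
  rw [← Fintype.sum_equiv (finCongr (two_mul m).symm)
      (fun a => f (finCongr (two_mul m).symm a)) f (fun _ => rfl)]
  rw [Fin.sum_univ_add]
  congr 1

private lemma mulVec_l {m : ℕ} (v : Fin (2*m) → ℝ) (i : Fin m) :
    (sympA m).mulVec v ⟨i, lt1 i⟩ = - v ⟨m + i, lt2 i⟩ := by
  rw [mulVec, dotProduct]
  rw [Finset.sum_eq_single (⟨m + i, lt2 i⟩ : Fin (2*m))]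
  · simp only [sympA, of_apply, Fin.val_mk]
    rw [if_neg (by have := i.isLt; omega), if_pos (by omega)]
    ring
  · intro k _ hk
    have hk' : (k : ℕ) ≠ m + i := fun h => hk (by ext; simpa using h)
    simp only [sympA, of_apply, Fin.val_mk]
    rw [if_neg (by have := i.isLt; omega), if_neg (by omega)]
    ring
  · simp

private lemma mulVec_r {m : ℕ} (v : Fin (2*m) → ℝ) (i : Fin m) :
    (sympA m).mulVec v ⟨m + i, lt2 i⟩ = v ⟨i, lt1 i⟩ := by
  rw [mulVec, dotProduct]
  rw [Finset.sum_eq_single (⟨i, lt1 i⟩ : Fin (2*m))]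
  · simp only [sympA, of_apply, Fin.val_mk]
    rw [if_pos (by omega)]
    ring
  · intro k _ hk
    have hk' : (k : ℕ) ≠ i := fun h => hk (by ext; simpa using h)
    simp only [sympA, of_apply, Fin.val_mk]
    rw [if_neg (by omega), if_neg (by have := k.isLt; have := i.isLt; omega)]
    ring
  · simp

private lemma inner_A {m : ℕ} (v w : Fin (2*m) → ℝ) :
    ∑ a, (sympA m).mulVec v a * (sympA m).mulVec w a = ∑ a, v a * w a := by
  rw [sum_split m (fun a => (sympA m).mulVec v a * (sympA m).mulVec w a),
      sum_split m (fun a => v a * w a)]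
  simp only [mulVec_l, mulVec_r, neg_mul_neg]
  exact add_comm _ _

private lemma skew_A {m : ℕ} (v : Fin (2*m) → ℝ) :
    ∑ a, v a * (sympA m).mulVec v a = 0 := by
  rw [sum_split m (fun a => v a * (sympA m).mulVec v a)]
  simp only [mulVec_l, mulVec_r]
  rw [← Finset.sum_add_distrib]
  apply Finset.sum_eq_zero
  intro i _
  ring

theorem symplectic_lift_ssc (m n : ℕ) (hn : 2 ≤ n)
    (x : Fin n → Fin (2 * m) → ℝ)
    (hunit : ∀ i, ∑ k, x i k ^ 2 = 1)
    (hinner : ∀ i j : Fin n, i ≠ j → ∑ k, x i k * x j k = -1 / ((n : ℝ) - 1))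
    (hsum : ∑ i, x i = 0)
    (X : Fin n → Matrix (Fin (2 * m)) (Fin 2) ℝ)
    (hX : ∀ i, X i = Matrix.of fun a b =>
      if b = 0 then x i a else (sympA m).mulVec (x i) a) :
    (∀ i, (X i)ᵀ * X i = 1) ∧
    (∀ i j : Fin n, i ≠ j →
      ∑ a, ∑ b, (X i a b - X j a b) ^ 2 = 4 * n / ((n : ℝ) - 1)) ∧
    ∑ i, X i = 0 := by
  have hn1 : (n : ℝ) - 1 ≠ 0 := by
    have : (2 : ℝ) ≤ n := by exact_mod_cast hn
    linarith
  refine ⟨?_, ?_, ?_⟩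
  · intro i
    ext b c
    rw [Matrix.mul_apply]
    simp only [transpose_apply, hX, of_apply]
    fin_cases b <;> fin_cases c <;>
      simp only [Matrix.one_apply, Fin.mk_zero, Fin.mk_one, Fin.zero_eq_one_iff,
        Fin.one_eq_zero_iff, Nat.succ_ne_self, if_true, if_false, ne_eq,
        OfNat.ofNat_ne_zero, reduceIte, one_ne_zero]
    · simpa [pow_two] using hunit i
    · simpa using skew_A (x i)
    · have := skew_A (x i)
      simp only [show ∀ a, x i a * (sympA m).mulVec (x i) a
        = (sympA m).mulVec (x i) a * x i a from fun a => mul_comm _ _] at this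
      simpa using this
    · rw [inner_A]
      simpa [pow_two] using hunit i
  · intro i j hij
    have key : ∑ a, (x i a - x j a) ^ 2 = 2 * n / ((n:ℝ) - 1) := by
      have expand : ∑ a, (x i a - x j a) ^ 2
          = ∑ a, (x i a ^ 2 + x j a ^ 2 - 2 * (x i a * x j a)) := by
        apply Finset.sum_congr rfl; intro a _; ring
      rw [expand, Finset.sum_sub_distrib, Finset.sum_add_distrib, ← Finset.mul_sum,
        hunit i, hunit j, hinner i j hij]
      field_simp
      ring
    have hAd : ∀ a, (sympA m).mulVec (x i) a - (sympA m).mulVec (x j) a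
        = (sympA m).mulVec (x i - x j) a := by
      intro a; rw [Matrix.mulVec_sub]; rfl
    calc ∑ a, ∑ b, (X i a b - X j a b) ^ 2
        = ∑ a, ((x i a - x j a)^2
            + ((sympA m).mulVec (x i) a - (sympA m).mulVec (x j) a)^2) := by
          apply Finset.sum_congr rfl; intro a _
          rw [Fin.sum_univ_two]
          simp [hX]
      _ = ∑ a, (x i a - x j a)^2
            + ∑ a, ((sympA m).mulVec (x i - x j) a)^2 := by
          rw [← Finset.sum_add_distrib]
          apply Finset.sum_congr rfl; intro a _; rw [hAd]
      _ = ∑ a, (x i a - x j a)^2 + ∑ a, ((x i - x j) a)^2 := by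
          rw [add_right_inj]
          simpa [pow_two] using inner_A (x i - x j) (x i - x j)
      _ = 4 * n / ((n : ℝ) - 1) := by
          simp only [Pi.sub_apply, key]
          field_simp
          ring
  · ext a b
    simp only [Finset.sum_apply, Matrix.sum_apply, Matrix.zero_apply, hX, of_apply]
    by_cases hb : b = 0
    · simp only [hb, if_pos rfl]
      have := congrFun hsum a
      simpa using this
    · simp only [if_neg hb]
      simp only [mulVec, dotProduct]
      rw [Finset.sum_comm]
      apply Finset.sum_eq_zero
      intro k _
      rw [← Finset.mul_sum]
      have : ∑ i, x i k = 0 := by simpa using congrFun hsum k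
      rw [this, mul_zero]
end

section
/- For all X_1, ..., X_n ∈ St_F(d,r) with n > m·d·r + 1 (m = [F:R]), it holds that min_{i≠j} ||X_i - X_j||_Fro ≤ sqrt(2r); equivalently, some pair i ≠ j satisfies Re Tr(X_i* X_j) ≥ 0. -/
open Matrix

/-- The Frobenius (chordal) distance between two matrices. -/
noncomputable def frobDist {𝕜 : Type*} [RCLike 𝕜] {d r : ℕ}
    (X Y : Matrix (Fin d) (Fin r) 𝕜) : ℝ :=
  Real.sqrt (∑ i, ∑ j, ‖X i j - Y i j‖ ^ 2)


lemma aux_card_le {V : Type*} [AddCommGroup V] [Module ℝ V] [FiniteDimensional ℝ V]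
    (B : V →ₗ[ℝ] V →ₗ[ℝ] ℝ) (hpos : ∀ x : V, x ≠ 0 → 0 < B x x)
    {n : ℕ} (v : Fin n → V)
    (h : ∀ i j, i ≠ j → B (v i) (v j) < 0) :
    n ≤ Module.finrank ℝ V + 1 := by
  rcases n with _ | m
  · omega
  suffices h' : LinearIndependent ℝ (fun i : Fin m => v i.castSucc) by
    have := h'.fintype_card_le_finrank
    simpa using this
  rw [Fintype.linearIndependent_iff]
  intro g hg
  set f : Fin m → V := fun i => v i.castSucc with hf
  set w := v (Fin.last m) with hw
  have hfw : ∀ i : Fin m, B (f i) w < 0 := fun i =>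
    h _ _ (Fin.castSucc_lt_last i).ne
  have hff : ∀ i j : Fin m, i ≠ j → B (f i) (f j) < 0 := fun i j hij =>
    h _ _ (by simpa using hij)
  set P := Finset.univ.filter (fun i => 0 < g i) with hP
  set N := Finset.univ.filter (fun i => g i < 0) with hN
  obtain ⟨u, hu⟩ : ∃ u : V, u = ∑ i ∈ P, g i • f i := ⟨_, rfl⟩
  have hdisj : Disjoint P N := by
    simp only [hP, hN, Finset.disjoint_filter]
    intro x _ hx; linarith
  have hsplit : u = ∑ i ∈ N, (-g i) • f i := by
    have hPN : ∑ i ∈ P, g i • f i + ∑ i ∈ N, g i • f i = 0 := by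
      rw [← Finset.sum_union hdisj, ← hg]
      refine Finset.sum_subset (Finset.subset_univ _) ?_
      intro x _ hx
      simp only [Finset.mem_union, hP, hN, Finset.mem_filter, Finset.mem_univ,
        true_and, not_or, not_lt] at hx
      have : g x = 0 := le_antisymm hx.1 hx.2
      simp [this]
    rw [hu, eq_neg_of_add_eq_zero_left hPN, ← Finset.sum_neg_distrib]
    exact Finset.sum_congr rfl fun x _ => (neg_smul _ _).symm
  have hBexp : ∀ (S : Finset (Fin m)) (c : Fin m → ℝ) (y : V),
      B (∑ i ∈ S, c i • f i) y = ∑ i ∈ S, c i * B (f i) y := by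
    intro S c y
    rw [map_sum, LinearMap.sum_apply]
    exact Finset.sum_congr rfl fun i _ => by
      rw [LinearMap.map_smul B, LinearMap.smul_apply, smul_eq_mul]
  have hu0 : u = 0 := by
    by_contra hne
    have hpos' := hpos u hne
    have hnp : B u u ≤ 0 := by
      nth_rewrite 1 [hu]
      rw [hBexp]
      apply Finset.sum_nonpos; intro i hi
      have hgi : 0 < g i := (Finset.mem_filter.mp hi).2
      have hle : B (f i) u ≤ 0 := by
        rw [hsplit]
        have e : B (f i) (∑ j ∈ N, (-g j) • f j) = ∑ j ∈ N, (-g j) * B (f i) (f j) := by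
          rw [map_sum]
          exact Finset.sum_congr rfl fun j _ => by
            rw [LinearMap.map_smul (B (f i)), smul_eq_mul]
        rw [e]
        apply Finset.sum_nonpos; intro j hj
        have hgj : g j < 0 := (Finset.mem_filter.mp hj).2
        have hij : i ≠ j := fun e => by subst e; linarith
        have := hff i j hij
        nlinarith
      nlinarith
    linarith
  have hPempty : P = ∅ := by
    by_contra hne
    obtain ⟨i0, hi0⟩ := Finset.nonempty_of_ne_empty hne
    have h0 : B u w = 0 := by rw [hu0]; simp
    rw [hu, hBexp] at h0
    have hlt := Finset.sum_lt_sum_of_nonempty ⟨i0, hi0⟩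
      (f := fun i => g i * B (f i) w) (g := fun _ => (0:ℝ)) ?_
    · simp only [Finset.sum_const_zero] at hlt; linarith
    · intro i hi
      have hgi : 0 < g i := (Finset.mem_filter.mp hi).2
      exact mul_neg_of_pos_of_neg hgi (hfw i)
  have hNempty : N = ∅ := by
    by_contra hne
    obtain ⟨i0, hi0⟩ := Finset.nonempty_of_ne_empty hne
    have h0 : B u w = 0 := by rw [hu0]; simp
    rw [hsplit, hBexp] at h0
    have hlt := Finset.sum_lt_sum_of_nonempty ⟨i0, hi0⟩
      (f := fun i => -g i * B (f i) w) (g := fun _ => (0:ℝ)) ?_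
    · simp only [Finset.sum_const_zero] at hlt; linarith
    · intro i hi
      have hgi : g i < 0 := (Finset.mem_filter.mp hi).2
      exact mul_neg_of_pos_of_neg (by linarith) (hfw i)
  intro i
  have h1 : i ∉ P := by rw [hPempty]; exact Finset.notMem_empty i
  have h2 : i ∉ N := by rw [hNempty]; exact Finset.notMem_empty i
  simp only [hP, hN, Finset.mem_filter, Finset.mem_univ, true_and, not_lt] at h1 h2
  linarith


theorem stiefel_orthoplex_bound {𝕜 : Type*} [RCLike 𝕜] (d r n : ℕ)
    (hn : Module.finrank ℝ 𝕜 * d * r + 1 < n)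
    (X : Fin n → Matrix (Fin d) (Fin r) 𝕜)
    (hSt : ∀ i, (X i)ᴴ * X i = 1) :
    ∃ i j : Fin n, i ≠ j ∧
      frobDist (X i) (X j) ≤ Real.sqrt (2 * r) ∧
      0 ≤ RCLike.re (Matrix.trace ((X i)ᴴ * X j)) := by
  classical
  have hB : ∃ B : Matrix (Fin d) (Fin r) 𝕜 →ₗ[ℝ] Matrix (Fin d) (Fin r) 𝕜 →ₗ[ℝ] ℝ,
      ∀ x y : Matrix (Fin d) (Fin r) 𝕜,
      B x y = ∑ a, ∑ b, RCLike.re ((starRingEnd 𝕜) (x a b) * y a b) := by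
    refine ⟨LinearMap.mk₂ ℝ
      (fun x y => ∑ a, ∑ b, RCLike.re ((starRingEnd 𝕜) (x a b) * y a b))
      ?_ ?_ ?_ ?_, fun x y => rfl⟩
    · intro x x' y
      rw [← Finset.sum_add_distrib]
      refine Finset.sum_congr rfl fun a _ => ?_
      rw [← Finset.sum_add_distrib]
      refine Finset.sum_congr rfl fun b _ => ?_
      have e : (x + x') a b = x a b + x' a b := rfl
      rw [e, map_add, add_mul, map_add]
    · intro c x y
      show (∑ a, ∑ b, RCLike.re ((starRingEnd 𝕜) ((c • x) a b) * y a b))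
        = c • ∑ a, ∑ b, RCLike.re ((starRingEnd 𝕜) (x a b) * y a b)
      rw [smul_eq_mul, Finset.mul_sum]
      refine Finset.sum_congr rfl fun a _ => ?_
      rw [Finset.mul_sum]
      refine Finset.sum_congr rfl fun b _ => ?_
      have e : (c • x) a b = c • x a b := rfl
      rw [e, RCLike.real_smul_eq_coe_mul, map_mul (starRingEnd 𝕜) _ _,
        RCLike.conj_ofReal, mul_assoc, RCLike.re_ofReal_mul]
    · intro x y y'
      rw [← Finset.sum_add_distrib]
      refine Finset.sum_congr rfl fun a _ => ?_
      rw [← Finset.sum_add_distrib]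
      refine Finset.sum_congr rfl fun b _ => ?_
      have e : (y + y') a b = y a b + y' a b := rfl
      rw [e, mul_add, map_add]
    · intro c x y
      show (∑ a, ∑ b, RCLike.re ((starRingEnd 𝕜) (x a b) * (c • y) a b))
        = c • ∑ a, ∑ b, RCLike.re ((starRingEnd 𝕜) (x a b) * y a b)
      rw [smul_eq_mul, Finset.mul_sum]
      refine Finset.sum_congr rfl fun a _ => ?_
      rw [Finset.mul_sum]
      refine Finset.sum_congr rfl fun b _ => ?_
      have e : (c • y) a b = c • y a b := rfl
      rw [e, RCLike.real_smul_eq_coe_mul, mul_left_comm, RCLike.re_ofReal_mul]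
  obtain ⟨B, hBdef⟩ := hB
  have hBtr : ∀ x y : Matrix (Fin d) (Fin r) 𝕜,
      B x y = RCLike.re (Matrix.trace (xᴴ * y)) := by
    intro x y
    rw [hBdef, Matrix.trace]
    simp only [Matrix.diag, Matrix.mul_apply, Matrix.conjTranspose_apply, map_sum,
      starRingEnd_apply]
    rw [Finset.sum_comm]
  have hpos : ∀ x : Matrix (Fin d) (Fin r) 𝕜, x ≠ 0 → 0 < B x x := by
    intro x hx
    have he : ∀ a b, RCLike.re ((starRingEnd 𝕜) (x a b) * x a b) = ‖x a b‖ ^ 2 := by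
      intro a b
      rw [RCLike.conj_mul]
      norm_cast
    rw [hBdef]
    simp only [he]
    obtain ⟨a, b, hab⟩ : ∃ a b, x a b ≠ 0 := by
      by_contra hc; push_neg at hc
      exact hx (by ext a b; simp [hc, Matrix.zero_apply])
    have h1 : (0:ℝ) < ‖x a b‖ ^ 2 := pow_pos (norm_pos_iff.mpr hab) 2
    have h2 : (0:ℝ) < ∑ b', ‖x a b'‖ ^ 2 :=
      Finset.sum_pos' (fun _ _ => by positivity) ⟨b, Finset.mem_univ b, h1⟩
    exact Finset.sum_pos' (fun _ _ => Finset.sum_nonneg fun _ _ => by positivity)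
      ⟨a, Finset.mem_univ a, h2⟩
  have hdiag : ∀ k, B (X k) (X k) = (r : ℝ) := by
    intro k
    rw [hBtr, hSt k, Matrix.trace_one]
    simp
  have key : ∃ i j : Fin n, i ≠ j ∧ 0 ≤ RCLike.re (Matrix.trace ((X i)ᴴ * X j)) := by
    by_contra hc
    push_neg at hc
    have hb := aux_card_le B hpos X (fun i j hij => by rw [hBtr]; exact hc i j hij)
    have hfr : Module.finrank ℝ (Matrix (Fin d) (Fin r) 𝕜)
        = Module.finrank ℝ 𝕜 * d * r := by
      rw [Module.finrank_matrix]
      simp [Fintype.card_fin]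
      ring
    rw [hfr] at hb
    exact absurd hb (not_le.mpr hn)
  obtain ⟨i, j, hij, hre⟩ := key
  refine ⟨i, j, hij, ?_, hre⟩
  have hsub : B (X i - X j) (X i - X j) =
      B (X i) (X i) + B (X j) (X j) - B (X i) (X j) - B (X j) (X i) := by
    simp only [map_sub, LinearMap.sub_apply]
    ring
  have hswap : B (X j) (X i) = B (X i) (X j) := by
    rw [hBdef, hBdef]
    refine Finset.sum_congr rfl fun a _ => Finset.sum_congr rfl fun b _ => ?_
    rw [← RCLike.conj_re ((starRingEnd 𝕜) (X i a b) * X j a b),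
      map_mul (starRingEnd 𝕜) _ _, RCLike.conj_conj, mul_comm]
  have hle : B (X i - X j) (X i - X j) ≤ 2 * (r : ℝ) := by
    rw [hsub, hswap, hdiag i, hdiag j, hBtr]
    linarith
  have hfrob : (∑ a, ∑ b, ‖X i a b - X j a b‖ ^ 2) = B (X i - X j) (X i - X j) := by
    rw [hBdef]
    refine Finset.sum_congr rfl fun a _ => Finset.sum_congr rfl fun b _ => ?_
    have e : (X i - X j) a b = X i a b - X j a b := rfl
    rw [e, RCLike.conj_mul]
    norm_cast
  unfold frobDist
  apply Real.sqrt_le_sqrt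
  rw [hfrob]
  exact hle
end

section
/- Let n points lie on the unit circle in R^2 (n ≥ 2). Then the minimum pairwise chordal distance is at most 2 sin(π/n), with equality if and only if the points are uniformly spaced (all consecutive angular gaps equal 2π/n). -/
/-!
Order the points as `θ 0 ≤ ⋯ ≤ θ (n-1)` and let the cyclic gaps be the `n` angles between
consecutive points, the last one wrapping around through `2π`; they are nonnegative and sum
to `2π`. The chord across a gap `g ∈ [0, 2π]` is `2 sin (g / 2)`. Some gap is at most `2π/n`,
which gives the bound. If `2 sin (π/n)` is the minimal distance, strict monotonicity of `sin`
on `[0, π/2]` forces every gap to be at least `2π/n`, hence all of them equal `2π/n`.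
Conversely, for equally spaced points the chord between `θ i` and `θ j` is
`2 |sin ((j - i) π / n)|` with `1 ≤ j - i ≤ n - 1`, which is at least `2 sin (π/n)`.
-/

open Real

/-- Chordal distance between the points of the unit circle in `ℝ²`
with angles `a` and `b`. -/
noncomputable def chord (a b : ℝ) : ℝ :=
  Real.sqrt ((Real.cos a - Real.cos b) ^ 2 + (Real.sin a - Real.sin b) ^ 2)

open Finset

lemma chord_comm (a b : ℝ) : chord a b = chord b a := by
  unfold chord; ring_nf

lemma chord_add_two_pi_right (a b : ℝ) : chord a (b + 2 * π) = chord a b := by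
  simp only [chord, cos_add_two_pi, sin_add_two_pi]

lemma chord_eq_two_mul_abs_sin (a b : ℝ) : chord a b = 2 * |sin ((b - a) / 2)| := by
  have half : cos (b - a) = 1 - 2 * sin ((b - a) / 2) ^ 2 := by
    rw [← cos_two_mul_eq_one_sub, mul_div_cancel₀ _ two_ne_zero]
  have h : (cos a - cos b) ^ 2 + (sin a - sin b) ^ 2 = (2 * sin ((b - a) / 2)) ^ 2 := by
    rw [cos_sub] at half
    nlinarith [sin_sq_add_cos_sq a, sin_sq_add_cos_sq b]
  rw [chord, h, sqrt_sq_eq_abs, abs_mul, abs_two]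

lemma chord_eq_two_mul_sin {a b : ℝ} (hab : a ≤ b) (hba : b ≤ a + 2 * π) :
    chord a b = 2 * sin ((b - a) / 2) := by
  rw [chord_eq_two_mul_abs_sin, abs_of_nonneg]
  exact sin_nonneg_of_nonneg_of_le_pi (by linarith) (by linarith)

lemma sin_le_sin_of_le_of_le_pi_sub {c y : ℝ} (hc : 0 ≤ c) (hcy : c ≤ y) (hyc : y ≤ π - c) :
    sin c ≤ sin y := by
  rcases le_total y (π / 2) with hy | hy
  · exact sin_le_sin_of_le_of_le_pi_div_two (by linarith [pi_pos]) hy hcy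
  · rw [← sin_pi_sub y]
    exact sin_le_sin_of_le_of_le_pi_div_two (by linarith [pi_pos]) (by linarith) (by linarith)

lemma sin_pi_div_le_sin_mul_pi_div {m n : ℝ} (hm : 1 ≤ m) (hmn : m ≤ n - 1) :
    sin (π / n) ≤ sin (m * π / n) := by
  have hn : 0 < n := by linarith
  apply sin_le_sin_of_le_of_le_pi_sub (by positivity)
  · rw [mul_div_assoc]; exact le_mul_of_one_le_left (by positivity) hm
  · rw [show π - π / n = (n - 1) * π / n by field_simp]
    gcongr

lemma sin_half_le_sin_pi_div {g n : ℝ} (hn : 2 ≤ n) (hg : 0 ≤ g)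
    (h : g ≤ 2 * π / n) : sin (g / 2) ≤ sin (π / n) := by
  have hπn : π / n ≤ π / 2 := div_le_div_of_nonneg_left pi_pos.le two_pos hn
  refine sin_le_sin_of_le_of_le_pi_div_two (by linarith [pi_pos]) hπn ?_
  rwa [div_le_iff₀ two_pos, div_mul_eq_mul_div, mul_comm]

lemma sin_half_lt_sin_pi_div {g n : ℝ} (hn : 2 ≤ n) (hg : 0 ≤ g)
    (h : g < 2 * π / n) : sin (g / 2) < sin (π / n) := by
  have hπn : π / n ≤ π / 2 := div_le_div_of_nonneg_left pi_pos.le two_pos hn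
  refine sin_lt_sin_of_lt_of_le_pi_div_two (by linarith [pi_pos]) hπn ?_
  rwa [div_lt_iff₀ two_pos, div_mul_eq_mul_div, mul_comm]

lemma val_finRotate {n : ℕ} (k : Fin n) :
    (finRotate n k : ℕ) = if (k : ℕ) + 1 = n then 0 else (k : ℕ) + 1 := by
  obtain ⟨m, rfl⟩ := Nat.exists_eq_succ_of_ne_zero k.pos.ne'
  rw [coe_finRotate]
  split_ifs <;> simp_all [Fin.ext_iff]

section CyclicGap

variable {n : ℕ}

noncomputable def cyclicGap (θ : Fin n → ℝ) (k : Fin n) : ℝ :=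
  θ (finRotate n k) - θ k + if (k : ℕ) + 1 = n then 2 * π else 0

variable (θ : Fin n → ℝ)

lemma cyclicGap_of_lt {k : Fin n} (hk : (k : ℕ) + 1 < n) :
    cyclicGap θ k = θ ⟨k + 1, hk⟩ - θ k := by
  have hrot : finRotate n k = ⟨k + 1, hk⟩ := Fin.ext (by rw [val_finRotate, if_neg hk.ne])
  simp [cyclicGap, hrot, hk.ne]

lemma cyclicGap_last (hn : 0 < n) :
    cyclicGap θ ⟨n - 1, by omega⟩ = θ ⟨0, hn⟩ + 2 * π - θ ⟨n - 1, by omega⟩ := by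
  have hrot : finRotate n ⟨n - 1, by omega⟩ = ⟨0, hn⟩ :=
    Fin.ext (by rw [val_finRotate, if_pos (by simp only; omega)])
  simp only [cyclicGap, hrot, show n - 1 + 1 = n by omega, if_true]
  ring

lemma sum_cyclicGap (hn : 0 < n) : ∑ k, cyclicGap θ k = 2 * π := by
  have hrot : ∑ k, θ (finRotate n k) = ∑ k, θ k := Equiv.sum_comp (finRotate n) θ
  have hwrap : ∑ k : Fin n, (if (k : ℕ) + 1 = n then 2 * π else 0) = 2 * π := by
    rw [Fintype.sum_eq_single ⟨n - 1, by omega⟩ fun k hk => if_neg ?_]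
    · simp only [show n - 1 + 1 = n by omega, if_true]
    · exact fun h => hk (Fin.ext (by simp only; omega))
  simp only [cyclicGap, sum_add_distrib, sum_sub_distrib, hrot, hwrap, sub_self, zero_add]

variable {θ}

lemma cyclicGap_nonneg (hn : 0 < n) (hmono : Monotone θ)
    (hrange : θ ⟨n - 1, by omega⟩ - θ ⟨0, hn⟩ < 2 * π) (k : Fin n) : 0 ≤ cyclicGap θ k := by
  by_cases hk : (k : ℕ) + 1 < n
  · rw [cyclicGap_of_lt θ hk, sub_nonneg]
    exact hmono (Fin.le_def.2 (by simp))
  · rw [show k = ⟨n - 1, Nat.sub_lt hn one_pos⟩ from Fin.ext (by simp only; omega),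
      cyclicGap_last θ hn]
    linarith

lemma cyclicGap_le_two_pi (hnonneg : ∀ k, 0 ≤ cyclicGap θ k) (k : Fin n) :
    cyclicGap θ k ≤ 2 * π := by
  rw [← sum_cyclicGap θ k.pos]
  exact single_le_sum (fun i _ => hnonneg i) (mem_univ k)

lemma chord_finRotate {k : Fin n} (h0 : 0 ≤ cyclicGap θ k) (h2π : cyclicGap θ k ≤ 2 * π) :
    chord (θ k) (θ (finRotate n k)) = 2 * sin (cyclicGap θ k / 2) := by
  have hshift : chord (θ k) (θ (finRotate n k)) = chord (θ k) (θ k + cyclicGap θ k) := by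
    unfold cyclicGap
    split_ifs
    · rw [← chord_add_two_pi_right]; ring_nf
    · ring_nf
  rw [hshift, chord_eq_two_mul_sin (by linarith) (by linarith), add_sub_cancel_left]

lemma exists_cyclicGap_le (hn : 0 < n) : ∃ k, cyclicGap θ k ≤ 2 * π / n := by
  have hsum : ∑ k, cyclicGap θ k ≤ ∑ _k : Fin n, 2 * π / n := by
    rw [sum_cyclicGap θ hn, sum_const, card_univ, Fintype.card_fin, nsmul_eq_mul]
    field_simp
    rfl
  simpa using exists_le_of_sum_le ⟨⟨0, hn⟩, mem_univ _⟩ hsum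

lemma cyclicGap_eq_of_forall_le (hn : 0 < n) (h : ∀ k, 2 * π / n ≤ cyclicGap θ k) :
    ∀ k, cyclicGap θ k = 2 * π / n := by
  have hsum : ∑ _k : Fin n, 2 * π / n = ∑ k, cyclicGap θ k := by
    rw [sum_cyclicGap θ hn, sum_const, card_univ, Fintype.card_fin, nsmul_eq_mul]
    field_simp
  exact fun k => ((sum_eq_sum_iff_of_le fun k _ => h k).1 hsum k (mem_univ k)).symm

end CyclicGap

lemma eq_add_mul_of_forall_succ_sub_eq {n : ℕ} {θ : Fin n → ℝ} {c : ℝ}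
    (h : ∀ k : Fin n, ∀ hk : (k : ℕ) + 1 < n, θ ⟨k + 1, hk⟩ - θ k = c) (k : Fin n) :
    θ k = θ ⟨0, k.pos⟩ + k * c := by
  obtain ⟨k, hk⟩ := k
  induction k with
  | zero => simp
  | succ k ih =>
    have step := h ⟨k, by omega⟩ hk
    rw [ih (by omega)] at step
    push_cast
    linarith

lemma isLeast_chord_of_forall_succ_sub_eq {n : ℕ} (hn : 2 ≤ n) {θ : Fin n → ℝ}
    (h : ∀ k : Fin n, ∀ hk : (k : ℕ) + 1 < n, θ ⟨k + 1, hk⟩ - θ k = 2 * π / n) :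
    IsLeast {s : ℝ | ∃ i j : Fin n, i ≠ j ∧ s = chord (θ i) (θ j)} (2 * sin (π / n)) := by
  have hchord : ∀ i j : Fin n, chord (θ i) (θ j) = 2 * |sin (((j : ℝ) - i) * π / n)| := by
    intro i j
    rw [chord_eq_two_mul_abs_sin, eq_add_mul_of_forall_succ_sub_eq h i,
      eq_add_mul_of_forall_succ_sub_eq h j]
    ring_nf
  have hlt : ∀ i j : Fin n, i < j → 2 * sin (π / n) ≤ chord (θ i) (θ j) := by
    intro i j hij
    have h1 : (i : ℝ) + 1 ≤ j := by exact_mod_cast Fin.lt_def.1 hij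
    have h2 : (j : ℝ) + 1 ≤ n := by exact_mod_cast j.isLt
    rw [hchord]
    gcongr
    exact (sin_pi_div_le_sin_mul_pi_div (by linarith) (by linarith)).trans (le_abs_self _)
  refine ⟨⟨⟨0, by omega⟩, ⟨1, by omega⟩, by simp, ?_⟩, ?_⟩
  · have hsin : 0 ≤ sin (π / n) :=
      sin_nonneg_of_nonneg_of_le_pi (by positivity) (div_le_self pi_pos.le (by norm_cast; omega))
    simp [hchord, abs_of_nonneg hsin]
  · rintro s ⟨i, j, hij, rfl⟩
    rcases hij.lt_or_gt with hij | hji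
    · exact hlt i j hij
    · rw [chord_comm]
      exact hlt j i hji

theorem circle_code_optimal (n : ℕ) (hn : 2 ≤ n) (θ : Fin n → ℝ)
    (hmono : Monotone θ) (hrange : θ ⟨n - 1, by omega⟩ - θ ⟨0, by omega⟩ < 2 * π) :
    (∃ i j : Fin n, i ≠ j ∧ chord (θ i) (θ j) ≤ 2 * Real.sin (π / n)) ∧
    (IsLeast {s : ℝ | ∃ i j : Fin n, i ≠ j ∧ s = chord (θ i) (θ j)}
        (2 * Real.sin (π / n)) ↔
      ((∀ k : Fin n, ∀ h : (k : ℕ) + 1 < n,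
          θ ⟨(k : ℕ) + 1, h⟩ - θ k = 2 * π / n) ∧
        θ ⟨0, by omega⟩ + 2 * π - θ ⟨n - 1, by omega⟩ = 2 * π / n)) := by
  have hn0 : 0 < n := by omega
  have hnR : (2 : ℝ) ≤ n := by exact_mod_cast hn
  have hnonneg := cyclicGap_nonneg hn0 hmono hrange
  have hchord (k : Fin n) : chord (θ k) (θ (finRotate n k)) = 2 * sin (cyclicGap θ k / 2) :=
    chord_finRotate (hnonneg k) (cyclicGap_le_two_pi hnonneg k)
  have hne (k : Fin n) : k ≠ finRotate n k :=
    (Equiv.Perm.mem_support.1 (support_finRotate_of_le hn ▸ mem_univ k)).symm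
  refine ⟨?_, fun hleast => ?_, fun huniform => isLeast_chord_of_forall_succ_sub_eq hn huniform.1⟩
  · obtain ⟨k, hk⟩ := exists_cyclicGap_le (θ := θ) hn0
    refine ⟨k, finRotate n k, hne k, ?_⟩
    rw [hchord]
    gcongr
    exact sin_half_le_sin_pi_div hnR (hnonneg k) hk
  · have hge (k : Fin n) : 2 * π / n ≤ cyclicGap θ k := by
      by_contra! hlt
      have hle := hleast.2 ⟨k, finRotate n k, hne k, (hchord k).symm⟩
      linarith [sin_half_lt_sin_pi_div hnR (hnonneg k) hlt]
    have heq := cyclicGap_eq_of_forall_le hn0 hge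
    exact ⟨fun k hk => (cyclicGap_of_lt θ hk).symm.trans (heq k),
      (cyclicGap_last θ hn0).symm.trans (heq _)⟩
end
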